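/- If H_X is dense in L²(P_X) modulo constants, then for every sub-σ-field G of σ(X), H_X is relatively universal with respect to G; i.e., for every ε > 0, the ε-measurable class (H_X)_G(ε) is dense modulo constants in L²(P_X)_G. -/

import Mathlib

open MeasureTheory

noncomputable def pcov {Ω : Type*} {mΩ : MeasurableSpace Ω} (μ : Measure Ω)
    (f g : Ω → ℝ) : ℝ :=
  ∫ ω, (f ω - ∫ x, f x ∂μ) * (g ω - ∫ x, g x ∂μ) ∂μ

noncomputable def pvar {Ω : Type*} {mΩ : MeasurableSpace Ω} (μ : Measure Ω)
    (f : Ω → ℝ) : ℝ :=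
  pcov μ f f

noncomputable def evar {Ω : Type*} {mΩ : MeasurableSpace Ω} (μ : Measure Ω)
    (G : MeasurableSpace Ω) (f : Ω → ℝ) : ℝ :=
  ∫ ω, (f ω - (μ[f|G]) ω) ^ 2 ∂μ

/-! Approximate `h` by `ev f` in variance. Since `h` is `G`-measurable, subtracting it does not
change the expected conditional variance, so `evar (ev f) = evar (h - ev f)`, and by the law of
total variance this is at most `pvar (h - ev f)`. -/

open ProbabilityTheory

section

variable {Ω : Type*} {m mΩ : MeasurableSpace Ω} {μ : Measure Ω}

lemma pvar_eq_variance {X : Ω → ℝ} (hX : AEMeasurable X μ) : pvar μ X = Var[X; μ] := by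
  simp only [pvar, pcov, variance_eq_integral hX, sq]

lemma evar_eq_integral_condVar (hm : m ≤ mΩ) [SigmaFinite (μ.trim hm)] (X : Ω → ℝ) :
    evar μ m X = ∫ ω, (Var[X; μ | m]) ω ∂μ :=
  (integral_condExp hm).symm

lemma evar_le_pvar [IsProbabilityMeasure μ] (hm : m ≤ mΩ) {X : Ω → ℝ} (hX : MemLp X 2 μ) :
    evar μ m X ≤ pvar μ X := by
  rw [evar_eq_integral_condVar hm, pvar_eq_variance hX.aemeasurable,
    ← integral_condVar_add_variance_condExp hm hX]
  exact le_add_of_nonneg_right (variance_nonneg _ _)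

lemma evar_sub_of_aestronglyMeasurable (hm : m ≤ mΩ) [SigmaFinite (μ.trim hm)] {X Y : Ω → ℝ}
    (hXm : AEStronglyMeasurable[m] X μ) (hX : Integrable X μ) (hY : Integrable Y μ) :
    evar μ m (X - Y) = evar μ m Y := by
  refine integral_congr_ae ?_
  filter_upwards [condExp_sub hX hY m, condExp_of_aestronglyMeasurable' hm hXm hX]
    with ω hsub hXω
  simp only [hsub, Pi.sub_apply, hXω]
  ring

end

theorem stmt_10_general {Ω : Type*} {mΩ : MeasurableSpace Ω} (μ : Measure Ω) [IsProbabilityMeasure μ]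
    {H : Type*} [NormedAddCommGroup H] [InnerProductSpace ℝ H]
    (ev : H →ₗ[ℝ] Ω → ℝ)
    (hmem : ∀ f : H, MemLp (ev f) 2 μ)
    (hdense : ∀ h : Ω → ℝ, MemLp h 2 μ → ∀ δ > (0 : ℝ), ∃ f : H, pvar μ (h - ev f) < δ)
    (G : MeasurableSpace Ω) (hG : G ≤ mΩ) :
    ∀ ε > (0 : ℝ), ∀ h : Ω → ℝ, MemLp h 2 μ →
      (∃ g : Ω → ℝ, Measurable[G] g ∧ h =ᵐ[μ] g) →
      ∀ δ > (0 : ℝ), ∃ f : H, evar μ G (ev f) < ε ∧ pvar μ (h - ev f) < δ := by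
  rintro ε hε h hh ⟨g, hgG, hhg⟩ δ hδ
  obtain ⟨f, hf⟩ := hdense h hh (min ε δ) (lt_min hε hδ)
  have hhG : AEStronglyMeasurable[G] h μ := ⟨g, hgG.stronglyMeasurable, hhg⟩
  refine ⟨f, ?_, hf.trans_le (min_le_right _ _)⟩
  calc evar μ G (ev f)
      = evar μ G (h - ev f) :=
        (evar_sub_of_aestronglyMeasurable hG hhG (hh.integrable one_le_two)
          ((hmem f).integrable one_le_two)).symm
    _ ≤ pvar μ (h - ev f) := evar_le_pvar hG (hh.sub (hmem f))
    _ < min ε δ := hf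
    _ ≤ ε := min_le_left _ _

/-- Theorem: relative universality: if `H_X` is dense in `L²(P_X)` modulo
constants, then for every sub-σ-field `G` of `σ(X)` (= the ambient σ-field `mΩ`), `H_X` is
relatively universal with respect to `G`: for every `ε > 0`, the `ε`-measurable class
`(H_X)_G(ε)` is dense modulo constants in `L²(P_X)_G`. -/
theorem stmt_10 {Ω : Type*} {mΩ : MeasurableSpace Ω} (μ : Measure Ω) [IsProbabilityMeasure μ]
    {H : Type*} [NormedAddCommGroup H] [InnerProductSpace ℝ H] [CompleteSpace H]
    (ev : H →ₗ[ℝ] Ω → ℝ)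
    (hmem : ∀ f : H, MemLp (ev f) 2 μ)
    (C : ℝ) (hC : 0 < C)
    (hdom : ∀ f : H, eLpNorm (ev f) 2 μ ≤ ENNReal.ofReal (C * ‖f‖))
    (hdense : ∀ h : Ω → ℝ, MemLp h 2 μ → ∀ δ > (0 : ℝ), ∃ f : H, pvar μ (h - ev f) < δ)
    (G : MeasurableSpace Ω) (hG : G ≤ mΩ) :
    ∀ ε > (0 : ℝ), ∀ h : Ω → ℝ, MemLp h 2 μ →
      (∃ g : Ω → ℝ, Measurable[G] g ∧ h =ᵐ[μ] g) →
      ∀ δ > (0 : ℝ), ∃ f : H, evar μ G (ev f) < ε ∧ pvar μ (h - ev f) < δ :=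
  stmt_10_general μ ev hmem hdense G hG
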